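/- arXiv:1411.3993 — 5 statements merged into one kernel-verified Lean document; each statement's English description precedes it below -/
import Mathlib

section
/- If F = {P, Q} (i.e., Fu = Pu + Q(conj u)) is a bounded invertible real-linear operator on a complex Hilbert space preserving the standard symplectic form ω, then its transpose Fᵗ also preserves ω; consequently PP* − QQ* = I and PQᵗ − QPᵗ = 0. -/
open scoped ComplexInnerProductSpace
open ContinuousLinearMap

set_option maxHeartbeats 1000000

/-- If `F = {P,Q}` (that is `F u = P u + Q (σ u)`) is a bounded invertible
real-linear operator on a complex Hilbert space preserving the standard symplectic
form `ω`, then its transpose `Fᵗ = {Pᵗ, Q*}` (where `Aᵗ = σ A* σ`) also preserves `ω`;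
consequently `P P* − Q Q* = I` and `P Qᵗ − Q Pᵗ = 0`. -/
theorem stmt3 {H : Type*} [NormedAddCommGroup H] [InnerProductSpace ℂ H] [CompleteSpace H]
    (σ : H →L[ℝ] H) (hσσ : ∀ x : H, σ (σ x) = x)
    (hσsmul : ∀ (c : ℂ) (x : H), σ (c • x) = (starRingEnd ℂ c) • σ x)
    (hσinner : ∀ x y : H, ⟪σ x, σ y⟫ = ⟪y, x⟫)
    (P Q : H →L[ℂ] H)
    (F : H → H) (hF : ∀ u : H, F u = P u + Q (σ u))
    (hFbij : Function.Bijective F)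
    (ω : H → H → ℂ)
    (hω : ∀ u v : H, ω u v = (Complex.I / 2) * (⟪u, v⟫ - (starRingEnd ℂ) ⟪u, v⟫))
    (hsymp : ∀ u v : H, ω (F u) (F v) = ω u v)
    (Ft : H → H) (hFt : ∀ u : H, Ft u = σ (adjoint P (σ u)) + adjoint Q (σ u)) :
    (∀ u v : H, ω (Ft u) (Ft v) = ω u v) ∧
    (∀ u : H, P (adjoint P u) - Q (adjoint Q u) = u) ∧
    (∀ u : H, P (σ (adjoint Q (σ u))) - Q (σ (adjoint P (σ u))) = 0) := by
  have hσflip : ∀ a b : H, ⟪σ a, b⟫ = ⟪σ b, a⟫ := by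
    intro a b
    have h := hσinner a (σ b)
    rwa [hσσ] at h
  -- Key lemma from the symplectic condition
  have keyA : ∀ u v : H, ⟪F u, P v⟫ - (starRingEnd ℂ) ⟪F u, Q (σ v)⟫ = ⟪u, v⟫ := by
    intro u v
    have h1 := hsymp u v
    have h2 := hsymp u (Complex.I • v)
    rw [hω, hω] at h1 h2
    have hFv : F v = P v + Q (σ v) := hF v
    have hFiv : F (Complex.I • v) = Complex.I • P v + (-Complex.I) • Q (σ v) := by
      rw [hF, hσsmul, map_smul, map_smul, Complex.conj_I]
    rw [hFv] at h1
    rw [hFiv] at h2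
    simp only [inner_add_right, inner_smul_right, map_add, map_sub, map_mul, map_neg,
      Complex.conj_I, Complex.conj_conj] at h1 h2 ⊢
    linear_combination (-Complex.I) * h1 - h2 +
      (⟪F u, P v⟫ - (starRingEnd ℂ) ⟪F u, Q (σ v)⟫ - ⟪u, v⟫) * Complex.I_sq
  -- g is a left inverse of F
  have hGF : ∀ u : H, adjoint P (F u) - σ (adjoint Q (F u)) = u := by
    intro u
    apply ext_inner_right ℂ
    intro v
    rw [inner_sub_left, ContinuousLinearMap.adjoint_inner_left]
    have h2 : ⟪σ (adjoint Q (F u)), v⟫ = (starRingEnd ℂ) ⟪F u, Q (σ v)⟫ := by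
      rw [hσflip, ← inner_conj_symm, ContinuousLinearMap.adjoint_inner_left]
    rw [h2, keyA]
  -- hence also a right inverse
  have hFG : ∀ w : H, F (adjoint P w - σ (adjoint Q w)) = w := by
    intro w
    obtain ⟨u, rfl⟩ := hFbij.2 w
    rw [hGF]
  -- expand the right-inverse identity
  have eq1 : ∀ w : H, (P (adjoint P w) - P (σ (adjoint Q w)))
      + (Q (σ (adjoint P w)) - Q (adjoint Q w)) = w := by
    intro w
    have h := hFG w
    rw [hF, map_sub σ, hσσ, map_sub P, map_sub Q] at h
    exact h
  have eq2 : ∀ w : H, (P (adjoint P w) + P (σ (adjoint Q w)))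
      - (Q (σ (adjoint P w)) + Q (adjoint Q w)) = w := by
    intro w
    have h := hFG (Complex.I • w)
    have hg : adjoint P (Complex.I • w) - σ (adjoint Q (Complex.I • w))
        = Complex.I • (adjoint P w + σ (adjoint Q w)) := by
      rw [map_smul, map_smul, hσsmul, Complex.conj_I]
      module
    rw [hg, hF] at h
    simp only [map_smul, hσsmul, Complex.conj_I, map_add, hσσ] at h
    have h' : Complex.I • ((P (adjoint P w) + P (σ (adjoint Q w)))
        - (Q (σ (adjoint P w)) + Q (adjoint Q w))) = Complex.I • w := by
      rw [← h]
      module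
    exact smul_right_injective H Complex.I_ne_zero h'
  have con2 : ∀ u : H, P (adjoint P u) - Q (adjoint Q u) = u := by
    intro u
    have h1 := eq1 u
    have h2 := eq2 u
    have h3 : (2 : ℂ) • (P (adjoint P u) - Q (adjoint Q u)) = (2 : ℂ) • u := by
      calc (2 : ℂ) • (P (adjoint P u) - Q (adjoint Q u))
          = ((P (adjoint P u) - P (σ (adjoint Q u)))
              + (Q (σ (adjoint P u)) - Q (adjoint Q u)))
            + ((P (adjoint P u) + P (σ (adjoint Q u)))
              - (Q (σ (adjoint P u)) + Q (adjoint Q u))) := by module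
        _ = u + u := by rw [h1, h2]
        _ = (2 : ℂ) • u := by module
    exact smul_right_injective H two_ne_zero h3
  have con3 : ∀ u : H, P (σ (adjoint Q (σ u))) - Q (σ (adjoint P (σ u))) = 0 := by
    intro u
    have h1 := eq1 (σ u)
    have h2 := eq2 (σ u)
    have h3 : (2 : ℂ) • (P (σ (adjoint Q (σ u))) - Q (σ (adjoint P (σ u)))) = 0 := by
      calc (2 : ℂ) • (P (σ (adjoint Q (σ u))) - Q (σ (adjoint P (σ u))))
          = ((P (adjoint P (σ u)) + P (σ (adjoint Q (σ u))))
              - (Q (σ (adjoint P (σ u))) + Q (adjoint Q (σ u))))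
            - ((P (adjoint P (σ u)) - P (σ (adjoint Q (σ u))))
              + (Q (σ (adjoint P (σ u))) - Q (adjoint Q (σ u)))) := by module
        _ = σ u - σ u := by rw [h1, h2]
        _ = 0 := sub_self _
    have := smul_right_injective H (two_ne_zero (α := ℂ))
      (by rw [h3, smul_zero] : (2 : ℂ) • (P (σ (adjoint Q (σ u))) - Q (σ (adjoint P (σ u)))) = (2:ℂ) • (0:H))
    exact this
  -- symmetry properties of ω
  have hωσ : ∀ a b : H, ω (σ a) (σ b) = -ω a b := by
    intro a b
    rw [hω, hω, hσinner]
    have e : (starRingEnd ℂ) ⟪a, b⟫ = ⟪b, a⟫ := inner_conj_symm b a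
    rw [← e, Complex.conj_conj]
    ring
  have hωU : ∀ (c : ℂ), (starRingEnd ℂ) c * c = 1 → ∀ a b : H,
      ω (c • a) (c • b) = ω a b := by
    intro c hc a b
    rw [hω, hω, inner_smul_left, inner_smul_right]
    simp only [map_mul, Complex.conj_conj]
    linear_combination (Complex.I / 2) * (⟪a, b⟫ - (starRingEnd ℂ) ⟪a, b⟫) * hc
  -- g is symplectic
  have hgsymp : ∀ a b : H,
      ω (adjoint P a - σ (adjoint Q a)) (adjoint P b - σ (adjoint Q b)) = ω a b := by
    intro a b
    have h := hsymp (adjoint P a - σ (adjoint Q a)) (adjoint P b - σ (adjoint Q b))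
    rw [hFG a, hFG b] at h
    exact h.symm
  -- rewrite Ft in terms of g and σ
  have hFt2 : ∀ u : H, Ft u = σ ((-Complex.I) •
      (adjoint P (Complex.I • σ u) - σ (adjoint Q (Complex.I • σ u)))) := by
    intro u
    simp only [hFt, map_smul, hσsmul, map_sub, map_add, hσσ, Complex.conj_I, map_neg,
      map_mul, neg_neg, neg_smul, smul_smul, smul_sub, smul_add, neg_mul, mul_neg,
      Complex.I_mul_I, one_smul, neg_sub]
    module
  have con1 : ∀ u v : H, ω (Ft u) (Ft v) = ω u v := by
    intro u v
    rw [hFt2 u, hFt2 v, hωσ, hωU (-Complex.I) (by simp), hgsymp,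
      hωU Complex.I (by simp), hωσ, neg_neg]
  exact ⟨con1, con2, con3⟩
end

section
/- If F = {P, Q} is a linear symplectomorphism of a complex Hilbert space, then ‖Q (conj P)⁻¹‖ = ‖Q‖ (1 + ‖Q‖²)^{−1/2} < 1. -/
/-! Write `ω u v = -Im ⟪u, v⟫`. Evaluating the invariance of `Im ⟪·, ·⟫` under `F` at `(u, I • u)`
gives `‖P u‖² = ‖u‖² + ‖Q (σ u)‖²`, i.e. `‖Pc x‖² = ‖x‖² + ‖Q x‖²`. The inverse of `F` is its
`Im ⟪·, ·⟫`-adjoint `w ↦ P† w - σ (Q† w)`, so the same identity holds for `P†`: both `P` and `P†`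
are bounded below, hence `P` is invertible. Substituting `y = Pc x`, the ratio `‖Q Pc⁻¹ y‖² / ‖y‖²`
becomes `t² / (1 + t²)` with `t = ‖Q x‖ / ‖x‖`, and since `t ↦ t² / (1 + t²)` is increasing,
`‖Q Pc⁻¹‖² = ‖Q‖² / (1 + ‖Q‖²)`. -/

open scoped ComplexInnerProductSpace InnerProduct

section NormOfComposition

variable {𝕜 E F G : Type*} [NontriviallyNormedField 𝕜]
  [SeminormedAddCommGroup E] [NormedSpace 𝕜 E] [SeminormedAddCommGroup F] [NormedSpace 𝕜 F]
  [SeminormedAddCommGroup G] [NormedSpace 𝕜 G]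

theorem ContinuousLinearMap.opNorm_sq_le_of_sq_bound (f : E →L[𝕜] F) {K : ℝ} (hK : 0 ≤ K)
    (h : ∀ x, ‖f x‖ ^ 2 ≤ K * ‖x‖ ^ 2) : ‖f‖ ^ 2 ≤ K := by
  have hf : ‖f‖ ≤ √K := f.opNorm_le_bound (Real.sqrt_nonneg K) fun x => by
    rw [← Real.sqrt_sq (norm_nonneg (f x)), ← Real.sqrt_sq (norm_nonneg x), ← Real.sqrt_mul hK]
    exact Real.sqrt_le_sqrt (h x)
  calc ‖f‖ ^ 2 ≤ √K ^ 2 := by gcongr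
    _ = K := Real.sq_sqrt hK

theorem norm_comp_symm_sq_eq (e : E ≃L[𝕜] G) (Q : E →L[𝕜] F)
    (he : ∀ x, ‖e x‖ ^ 2 = ‖x‖ ^ 2 + ‖Q x‖ ^ 2) :
    ‖Q ∘L (e.symm : G →L[𝕜] E)‖ ^ 2 = ‖Q‖ ^ 2 / (1 + ‖Q‖ ^ 2) := by
  set A := Q ∘L (e.symm : G →L[𝕜] E)
  have hA : ∀ x, A (e x) = Q x := fun x => by simp [A]
  have hQ : ∀ x, ‖Q x‖ ^ 2 ≤ ‖Q‖ ^ 2 * ‖x‖ ^ 2 := fun x => by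
    rw [← mul_pow]; exact pow_le_pow_left₀ (norm_nonneg _) (Q.le_opNorm x) 2
  have hAe : ∀ x, ‖Q x‖ ^ 2 ≤ ‖A‖ ^ 2 * (‖x‖ ^ 2 + ‖Q x‖ ^ 2) := fun x => by
    rw [← he, ← hA, ← mul_pow]; exact pow_le_pow_left₀ (norm_nonneg _) (A.le_opNorm _) 2
  have hupper : ‖A‖ ^ 2 ≤ ‖Q‖ ^ 2 / (1 + ‖Q‖ ^ 2) := by
    refine A.opNorm_sq_le_of_sq_bound (by positivity) fun y => ?_
    obtain ⟨x, rfl⟩ := e.surjective y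
    rw [hA, he, div_mul_eq_mul_div, le_div_iff₀ (by positivity)]
    nlinarith [hQ x]
  have hlower : ‖Q‖ ^ 2 ≤ ‖A‖ ^ 2 * (1 + ‖Q‖ ^ 2) := by
    rcases lt_or_ge (‖A‖ ^ 2) 1 with ha | ha
    · have hQ' : ‖Q‖ ^ 2 ≤ ‖A‖ ^ 2 / (1 - ‖A‖ ^ 2) :=
        Q.opNorm_sq_le_of_sq_bound (by have := sq_nonneg ‖A‖; positivity) fun x => by
          rw [div_mul_eq_mul_div, le_div_iff₀ (by linarith)]
          nlinarith [hAe x]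
      rw [le_div_iff₀ (by linarith)] at hQ'
      linarith
    · nlinarith [sq_nonneg ‖Q‖]
  rw [eq_div_iff (by positivity)]
  exact le_antisymm ((le_div_iff₀ (by positivity)).1 hupper) hlower

theorem norm_comp_symm_eq (e : E ≃L[𝕜] G) (Q : E →L[𝕜] F)
    (he : ∀ x, ‖e x‖ ^ 2 = ‖x‖ ^ 2 + ‖Q x‖ ^ 2) :
    ‖Q ∘L (e.symm : G →L[𝕜] E)‖ = ‖Q‖ / √(1 + ‖Q‖ ^ 2) := by
  rw [← Real.sqrt_sq (norm_nonneg (Q ∘L _)), norm_comp_symm_sq_eq e Q he,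
    Real.sqrt_div' _ (by positivity), Real.sqrt_sq (norm_nonneg Q)]

end NormOfComposition

theorem div_sqrt_one_add_sq_lt_one (c : ℝ) : c / √(1 + c ^ 2) < 1 := by
  rw [div_lt_one (by positivity)]
  calc c ≤ |c| := le_abs_self c
    _ = √(c ^ 2) := (Real.sqrt_sq_eq_abs c).symm
    _ < √(1 + c ^ 2) := Real.sqrt_lt_sqrt (sq_nonneg c) (lt_one_add _)

theorem ContinuousLinearMap.surjective_of_antilipschitz_of_injective_adjoint {𝕜 E F : Type*}
    [RCLike 𝕜] [NormedAddCommGroup E] [InnerProductSpace 𝕜 E] [CompleteSpace E]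
    [NormedAddCommGroup F] [InnerProductSpace 𝕜 F] [CompleteSpace F]
    (T : E →L[𝕜] F) {K : NNReal} (hT : AntilipschitzWith K T) (hT' : Function.Injective (T†)) :
    Function.Surjective T := by
  have hclosed : IsClosed (T.range : Set F) := hT.isClosed_range T.uniformContinuous
  have := hclosed.completeSpace_coe
  exact LinearMap.range_eq_top.1 <| Submodule.orthogonal_eq_bot_iff.1 <|
    T.orthogonal_range.trans (LinearMap.ker_eq_bot.2 hT')

section ImaginaryPart

variable {H : Type*} [NormedAddCommGroup H] [InnerProductSpace ℂ H]

theorem ext_im_inner {x y : H} (h : ∀ u, (⟪u, x⟫).im = (⟪u, y⟫).im) : x = y :=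
  ext_inner_left ℂ fun u => Complex.ext (by simpa using h (Complex.I • u)) (h u)

theorem im_inner_I_smul_right (x y : H) : (⟪x, Complex.I • y⟫).im = (⟪x, y⟫).re := by
  simp

theorem re_inner_add_sub (a b : H) : (⟪a + b, a - b⟫).re = ‖a‖ ^ 2 - ‖b‖ ^ 2 := by
  have ha : (⟪a, a⟫).re = ‖a‖ ^ 2 := inner_self_eq_norm_sq (𝕜 := ℂ) a
  have hb : (⟪b, b⟫).re = ‖b‖ ^ 2 := inner_self_eq_norm_sq (𝕜 := ℂ) b
  rw [inner_add_left, inner_sub_right, inner_sub_right, ← inner_conj_symm a b]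
  simp only [Complex.add_re, Complex.sub_re, Complex.conj_re, ha, hb]
  ring

theorem im_inner_map_map_of_im_inner_adjoint {F G : H → H}
    (hF : ∀ u v, (⟪F u, F v⟫).im = (⟪u, v⟫).im) (hFG : ∀ u w, (⟪F u, w⟫).im = (⟪u, G w⟫).im)
    (hsurj : Function.Surjective F) (u v : H) : (⟪G u, G v⟫).im = (⟪u, v⟫).im := by
  have hGF : ∀ z, G (F z) = z := fun z => ext_im_inner fun u => by rw [← hFG, hF]
  obtain ⟨a, rfl⟩ := hsurj u
  obtain ⟨b, rfl⟩ := hsurj v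
  rw [hGF, hGF, hF]

theorem norm_sq_apply_eq_of_im_inner (P : H →L[ℂ] H) (A : H →L⋆[ℂ] H)
    (h : ∀ u v, (⟪P u + A u, P v + A v⟫).im = (⟪u, v⟫).im) (u : H) :
    ‖P u‖ ^ 2 = ‖u‖ ^ 2 + ‖A u‖ ^ 2 := by
  have hI : P (Complex.I • u) + A (Complex.I • u) = Complex.I • (P u - A u) := by
    rw [map_smul, map_smulₛₗ, Complex.conj_I, smul_sub, neg_smul, sub_eq_add_neg]
  have := h u (Complex.I • u)
  rw [hI, im_inner_I_smul_right, im_inner_I_smul_right, re_inner_add_sub,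
    show (⟪u, u⟫).re = ‖u‖ ^ 2 from inner_self_eq_norm_sq (𝕜 := ℂ) u] at this
  linarith

theorem antilipschitzWith_one_of_im_inner (P : H →L[ℂ] H) (A : H →L⋆[ℂ] H)
    (h : ∀ u v, (⟪P u + A u, P v + A v⟫).im = (⟪u, v⟫).im) : AntilipschitzWith 1 P :=
  P.antilipschitz_of_bound fun u => by
    have := norm_sq_apply_eq_of_im_inner P A h u
    rw [NNReal.coe_one, one_mul]
    nlinarith [norm_nonneg u, norm_nonneg (P u), sq_nonneg ‖A u‖]

end ImaginaryPart

section AntiunitaryConjugation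

variable {H : Type*} [NormedAddCommGroup H] [InnerProductSpace ℂ H]
  {σ : H →L⋆[ℂ] H} (hσσ : Function.Involutive σ) (hσinner : ∀ x y, ⟪σ x, σ y⟫ = ⟪y, x⟫)

include hσinner in
theorem norm_apply_of_inner_map_map (x : H) : ‖σ x‖ = ‖x‖ := by
  rw [@norm_eq_sqrt_re_inner ℂ, @norm_eq_sqrt_re_inner ℂ, hσinner]

include hσσ hσinner in
theorem im_inner_add_apply_eq_adjoint [CompleteSpace H] (P Q : H →L[ℂ] H) (u w : H) :
    (⟪P u + Q (σ u), w⟫).im = (⟪u, (P†) w + (-σ.comp (Q†)) w⟫).im := by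
  have hQ : ⟪Q (σ u), w⟫ = ⟪σ ((Q†) w), u⟫ :=
    calc ⟪Q (σ u), w⟫ = ⟪σ u, (Q†) w⟫ := (ContinuousLinearMap.adjoint_inner_right Q (σ u) w).symm
      _ = ⟪σ ((Q†) w), u⟫ := by simpa only [hσσ ((Q†) w)] using hσinner u (σ ((Q†) w))
  rw [inner_add_left, hQ, ← ContinuousLinearMap.adjoint_inner_right, inner_add_right,
    ← inner_conj_symm (σ _) u]
  simp only [neg_apply, ContinuousLinearMap.comp_apply, inner_neg_right,
    Complex.add_im, Complex.neg_im, Complex.conj_im]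

include hσσ hσinner in
theorem bijective_of_im_inner_add_apply [CompleteSpace H] (P Q : H →L[ℂ] H)
    (h : ∀ u v, (⟪P u + Q (σ u), P v + Q (σ v)⟫).im = (⟪u, v⟫).im)
    (hsurj : Function.Surjective fun u => P u + Q (σ u)) : Function.Bijective P := by
  have hadj : ∀ u v, (⟪(P†) u + (-σ.comp (Q†)) u, (P†) v + (-σ.comp (Q†)) v⟫).im = (⟪u, v⟫).im :=
    im_inner_map_map_of_im_inner_adjoint h (im_inner_add_apply_eq_adjoint hσσ hσinner P Q) hsurj
  have hP := antilipschitzWith_one_of_im_inner P (Q.comp σ) h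
  exact ⟨hP.injective, P.surjective_of_antilipschitz_of_injective_adjoint hP
    (antilipschitzWith_one_of_im_inner (P†) _ hadj).injective⟩

include hσσ hσinner in
theorem norm_sq_conj_apply (P Q : H →L[ℂ] H)
    (h : ∀ u v, (⟪P u + Q (σ u), P v + Q (σ v)⟫).im = (⟪u, v⟫).im) (x : H) :
    ‖(σ.comp (P.comp σ)) x‖ ^ 2 = ‖x‖ ^ 2 + ‖Q x‖ ^ 2 := by
  simpa [norm_apply_of_inner_map_map hσinner, hσσ x] using
    norm_sq_apply_eq_of_im_inner P (Q.comp σ) h (σ x)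

end AntiunitaryConjugation

theorem Complex.I_div_two_mul_sub_conj (z : ℂ) : I / 2 * (z - (starRingEnd ℂ) z) = -z.im := by
  rw [Complex.sub_conj]
  push_cast
  ring_nf
  simp [Complex.I_sq]

/-- If `F = {P,Q}` is a linear symplectomorphism of a complex Hilbert
space, then `conj P` (the operator `x ↦ σ (P (σ x))`) is invertible and
`‖Q (conj P)⁻¹‖ = ‖Q‖ (1 + ‖Q‖²)^{-1/2} < 1`. -/
theorem stmt6 {H : Type*} [NormedAddCommGroup H] [InnerProductSpace ℂ H] [CompleteSpace H]
    (σ : H →L[ℝ] H) (hσσ : ∀ x : H, σ (σ x) = x)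
    (hσsmul : ∀ (c : ℂ) (x : H), σ (c • x) = (starRingEnd ℂ c) • σ x)
    (hσinner : ∀ x y : H, ⟪σ x, σ y⟫ = ⟪y, x⟫)
    (P Q : H →L[ℂ] H)
    (F : H → H) (hF : ∀ u : H, F u = P u + Q (σ u))
    (hFbij : Function.Bijective F)
    (ω : H → H → ℂ)
    (hω : ∀ u v : H, ω u v = (Complex.I / 2) * (⟪u, v⟫ - (starRingEnd ℂ) ⟪u, v⟫))
    (hsymp : ∀ u v : H, ω (F u) (F v) = ω u v) :
    ∃ Pc : H ≃L[ℂ] H, (∀ x : H, Pc x = σ (P (σ x))) ∧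
      ‖Q.comp (Pc.symm : H →L[ℂ] H)‖ = ‖Q‖ / Real.sqrt (1 + ‖Q‖ ^ 2) ∧
      ‖Q.comp (Pc.symm : H →L[ℂ] H)‖ < 1 := by
  let σc : H →L⋆[ℂ] H := ⟨⟨σ.toLinearMap.toAddHom, hσsmul⟩, σ.continuous⟩
  have hFσc : F = fun u => P u + Q (σc u) := funext hF
  have hsymp' : ∀ u v, (⟪P u + Q (σc u), P v + Q (σc v)⟫).im = (⟪u, v⟫).im := fun u v => by
    have := hsymp u v
    rw [hω, hω, hF, hF, Complex.I_div_two_mul_sub_conj, Complex.I_div_two_mul_sub_conj] at this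
    exact_mod_cast neg_inj.1 this
  have hP := bijective_of_im_inner_add_apply (σ := σc) hσσ hσinner P Q hsymp' (hFσc ▸ hFbij.2)
  have hσc : Function.Bijective σc := Function.Involutive.bijective hσσ
  have hPc : Function.Bijective (σc.comp (P.comp σc)) := hσc.comp (hP.comp hσc)
  let Pc := ContinuousLinearEquiv.ofBijective (σc.comp (P.comp σc))
    (LinearMap.ker_eq_bot.2 hPc.1) (LinearMap.range_eq_top.2 hPc.2)
  have hPc_norm := norm_sq_conj_apply (σ := σc) hσσ hσinner P Q hsymp'
  refine ⟨Pc, fun x => rfl, norm_comp_symm_eq Pc Q hPc_norm, ?_⟩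
  rw [norm_comp_symm_eq Pc Q hPc_norm]
  exact div_sqrt_one_add_sq_lt_one _
end

section
/- Let B : X → X be a bounded linear operator on a real Hilbert space such that I + B is invertible and L = (I + B)⁻¹(I − B) satisfies ‖Lx‖ < ‖x‖ for all x ≠ 0. Then ⟨Bx, x⟩ > 0 for all x ≠ 0. -/
open scoped RealInnerProductSpace

/-- Converse of the contraction characterization: if `I + B` is
invertible and `L = (I + B)⁻¹(I − B)` satisfies `‖Lx‖ < ‖x‖` for all `x ≠ 0`, then
`⟨Bx, x⟩ > 0` for all `x ≠ 0`. -/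
theorem stmt9 {X : Type*} [NormedAddCommGroup X] [InnerProductSpace ℝ X] [CompleteSpace X]
    (B : X →L[ℝ] X) (E : X ≃L[ℝ] X) (hE : ∀ x : X, E x = x + B x)
    (hL : ∀ x : X, x ≠ 0 → ‖E.symm (x - B x)‖ < ‖x‖) :
    ∀ x : X, x ≠ 0 → 0 < ⟪B x, x⟫ := by
  intro u hu
  set x : X := (2:ℝ)⁻¹ • (u + B u) with hx
  set y : X := (2:ℝ)⁻¹ • (u - B u) with hy
  have hx0 : x ≠ 0 := by
    have : x = (2:ℝ)⁻¹ • E u := by rw [hE]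
    rw [this]
    simp only [ne_eq, smul_eq_zero, inv_eq_zero, OfNat.ofNat_ne_zero, false_or]
    exact fun h => hu (by simpa using congrArg E.symm h)
  have hEy : E y = x - B x := by
    rw [hE, hx, hy]
    simp only [map_smul, map_add, map_sub]
    module
  have hyE : E.symm (x - B x) = y := by rw [← hEy, E.symm_apply_apply]
  have hlt := hL x hx0
  rw [hyE] at hlt
  have hsq : ‖y‖ ^ 2 < ‖x‖ ^ 2 :=
    pow_lt_pow_left₀ hlt (norm_nonneg _) two_ne_zero
  have hxyu : x + y = u := by rw [hx, hy]; module
  have hxyB : x - y = B u := by rw [hx, hy]; module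
  have : ⟪B u, u⟫ = ‖x‖ ^ 2 - ‖y‖ ^ 2 := by
    rw [← hxyB, ← hxyu, inner_sub_left, inner_add_right, inner_add_right,
      real_inner_self_eq_norm_sq, real_inner_self_eq_norm_sq, real_inner_comm y x]
    ring
  rw [this]
  linarith
end

section
/- With Q = [[0, 2Q₀],[0,0]] on H₁ ⊕ H₂ where Q₀ = Diag(c₁, c₂, …), 0 < cₙ < 1, the tameness inequality Re⟨Q conj z, z⟩ < ‖z‖² holds for every z ≠ 0, while ‖Q‖ = 2 if cₙ → 1. -/
/-! Since `Q` only feeds the second coordinate into the first, `Re⟪Q (conj z), z⟫` is the sum of the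
terms `2 cₙ Re (z₁ₙ z₂ₙ)`, and `2 |cₙ| |z₁ₙ| |z₂ₙ| < |z₁ₙ|² + |z₂ₙ|²` unless both coordinates vanish.
For the norm, `‖Q z‖ ≤ 2 ‖z₂‖`, while `Q (0, eₙ) = (2 cₙ eₙ, 0)` with `2 cₙ → 2`. -/

open scoped ComplexInnerProductSpace

/-- `ℓ²(ℕ, ℂ)`, one copy of the separable Hilbert space. -/
noncomputable abbrev Stmt13.E : Type := lp (fun _ : ℕ => ℂ) 2

/-- `H = H₁ ⊕ H₂`, the Hilbert direct sum of two copies of `ℓ²(ℕ, ℂ)`. -/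
noncomputable abbrev Stmt13.H : Type := WithLp 2 (Stmt13.E × Stmt13.E)

open Filter

section lpTwo

variable {ι : Type*} {E F : ι → Type*} [∀ i, NormedAddCommGroup (E i)]
  [∀ i, NormedAddCommGroup (F i)]

theorem lp.hasSum_norm_sq (f : lp E 2) : HasSum (fun i => ‖f i‖ ^ 2) (‖f‖ ^ 2) := by
  simpa using lp.hasSum_norm (p := 2) (by norm_num) f

theorem lp.norm_le_mul_of_forall_norm_apply_le {K : ℝ} (hK : 0 ≤ K) {f : lp E 2} {g : lp F 2}
    (h : ∀ i, ‖g i‖ ≤ K * ‖f i‖) : ‖g‖ ≤ K * ‖f‖ := by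
  have hsq : ‖g‖ ^ 2 ≤ (K * ‖f‖) ^ 2 := by
    rw [mul_pow]
    refine hasSum_le (fun i => ?_) (lp.hasSum_norm_sq g) ((lp.hasSum_norm_sq f).mul_left (K ^ 2))
    rw [← mul_pow]
    exact pow_le_pow_left₀ (norm_nonneg _) (h i) 2
  exact (pow_le_pow_iff_left₀ (norm_nonneg _) (by positivity) two_ne_zero).mp hsq

theorem WithLp.hasSum_prod_norm_sq (z : WithLp 2 (lp E 2 × lp F 2)) :
    HasSum (fun i => ‖z.ofLp.1 i‖ ^ 2 + ‖z.ofLp.2 i‖ ^ 2) (‖z‖ ^ 2) := by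
  rw [WithLp.prod_norm_sq_eq_of_L2]
  exact (lp.hasSum_norm_sq _).add (lp.hasSum_norm_sq _)

end lpTwo

theorem Complex.mul_re_mul_le_abs_mul (c : ℝ) (a b : ℂ) :
    c * (a * b).re ≤ |c| * (‖a‖ * ‖b‖) := by
  calc c * (a * b).re ≤ |c * (a * b).re| := le_abs_self _
    _ = |c| * |(a * b).re| := abs_mul _ _
    _ ≤ |c| * (‖a‖ * ‖b‖) := by
      rw [← norm_mul]
      exact mul_le_mul_of_nonneg_left (abs_re_le_norm _) (abs_nonneg c)

theorem Complex.two_mul_mul_re_mul_le {c : ℝ} (hc : |c| ≤ 1) (a b : ℂ) :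
    2 * c * (a * b).re ≤ ‖a‖ ^ 2 + ‖b‖ ^ 2 := by
  nlinarith [mul_re_mul_le_abs_mul c a b, two_mul_le_add_sq ‖a‖ ‖b‖,
    mul_nonneg (norm_nonneg a) (norm_nonneg b)]

theorem Complex.two_mul_mul_re_mul_lt {c : ℝ} (hc : |c| < 1) {a b : ℂ}
    (hab : 0 < ‖a‖ ^ 2 + ‖b‖ ^ 2) : 2 * c * (a * b).re < ‖a‖ ^ 2 + ‖b‖ ^ 2 := by
  nlinarith [mul_re_mul_le_abs_mul c a b, two_mul_le_add_sq ‖a‖ ‖b‖, abs_nonneg c]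

namespace Stmt13

variable {c : ℕ → ℝ} {Q : H →L[ℂ] H}

theorem hasSum_re_inner_conj
    (hQ : ∀ z : H, (∀ n, (Q z).ofLp.1 n = 2 * (c n : ℂ) * z.ofLp.2 n) ∧ (Q z).ofLp.2 = 0)
    (σ : H → H) (hσ : ∀ z : H, ∀ n, (σ z).ofLp.2 n = (starRingEnd ℂ) (z.ofLp.2 n)) (z : H) :
    HasSum (fun n => 2 * c n * (z.ofLp.1 n * z.ofLp.2 n).re) (⟪Q (σ z), z⟫).re := by
  rw [WithLp.prod_inner_apply, (hQ _).2, inner_zero_left, add_zero]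
  convert Complex.hasSum_re (lp.hasSum_inner (Q (σ z)).ofLp.1 z.ofLp.1) using 2 with n
  rw [RCLike.inner_apply, (hQ _).1, hσ, map_mul, map_mul, Complex.conj_conj, Complex.conj_ofReal,
    map_ofNat]
  simp only [Complex.mul_re, Complex.mul_im, Complex.ofReal_re, Complex.ofReal_im, Complex.re_ofNat,
    Complex.im_ofNat]
  ring

theorem norm_apply_le (hc : ∀ n, |c n| ≤ 1)
    (hQ : ∀ z : H, (∀ n, (Q z).ofLp.1 n = 2 * (c n : ℂ) * z.ofLp.2 n) ∧ (Q z).ofLp.2 = 0)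
    (z : H) : ‖Q z‖ ≤ 2 * ‖z‖ :=
  calc ‖Q z‖ = ‖(Q z).ofLp.1‖ := by
        rw [WithLp.prod_norm_eq_of_L2, WithLp.snd, (hQ z).2, norm_zero]
        simp
    _ ≤ 2 * ‖z.ofLp.2‖ := by
        refine lp.norm_le_mul_of_forall_norm_apply_le zero_le_two fun n => ?_
        rw [(hQ z).1, norm_mul, norm_mul, Complex.norm_real, Real.norm_eq_abs, Complex.norm_two]
        nlinarith [hc n, norm_nonneg (z.ofLp.2 n)]
    _ ≤ 2 * ‖z‖ := by gcongr; exact WithLp.norm_snd_le _ z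

theorem two_mul_abs_le_opNorm
    (hQ : ∀ z : H, ∀ n, (Q z).ofLp.1 n = 2 * (c n : ℂ) * z.ofLp.2 n) (n : ℕ) :
    2 * |c n| ≤ ‖Q‖ := by
  let e : H := WithLp.toLp 2 (0, lp.single 2 n 1)
  have he : ‖e‖ = 1 := by
    rw [WithLp.prod_norm_eq_of_L2]
    simp [e, lp.norm_single]
  calc 2 * |c n| = ‖(Q e).ofLp.1 n‖ := by rw [hQ]; simp [e]
    _ ≤ ‖(Q e).ofLp.1‖ := lp.norm_apply_le_norm two_ne_zero _ n
    _ ≤ ‖Q e‖ := WithLp.norm_fst_le _ _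
    _ ≤ ‖Q‖ := by simpa [he] using Q.le_opNorm e

end Stmt13

/-- With `Q = [[0, 2Q₀],[0,0]]` on `H₁ ⊕ H₂`, where
`Q₀ = Diag(c₁,c₂,…)` and `0 < cₙ < 1`, the tameness inequality
`Re⟨Q (conj z), z⟩ < ‖z‖²` holds for every `z ≠ 0`, while `‖Q‖ = 2` if `cₙ → 1`.
Here `conj` is the coordinatewise conjugation `σ`. -/
theorem stmt13 (c : ℕ → ℝ) (hc0 : ∀ n, 0 < c n) (hc1 : ∀ n, c n < 1)
    (Q : Stmt13.H →L[ℂ] Stmt13.H)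
    (hQ : ∀ z : Stmt13.H, (∀ n, (Q z).ofLp.1 n = 2 * (c n : ℂ) * z.ofLp.2 n) ∧ (Q z).ofLp.2 = 0)
    (σ : Stmt13.H →L[ℝ] Stmt13.H)
    (hσ : ∀ z : Stmt13.H, (∀ n, (σ z).ofLp.1 n = (starRingEnd ℂ) (z.ofLp.1 n)) ∧
          (∀ n, (σ z).ofLp.2 n = (starRingEnd ℂ) (z.ofLp.2 n))) :
    (∀ z : Stmt13.H, z ≠ 0 → (⟪Q (σ z), z⟫).re < ‖z‖ ^ 2) ∧
    (Filter.Tendsto c Filter.atTop (nhds 1) → ‖Q‖ = 2) := by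
  have hc : ∀ n, |c n| < 1 := fun n => abs_lt.mpr ⟨by linarith [hc0 n], hc1 n⟩
  refine ⟨fun z hz => ?_, fun hlim => ?_⟩
  · have hnorm := WithLp.hasSum_prod_norm_sq z
    obtain ⟨n, hn⟩ : ∃ n, 0 < ‖z.ofLp.1 n‖ ^ 2 + ‖z.ofLp.2 n‖ ^ 2 := by
      by_contra! h
      exact (pow_pos (norm_pos_iff.mpr hz) 2).not_ge
        (hasSum_le h hnorm (hasSum_zero (L := .unconditional ℕ)))
    exact hasSum_lt (fun m => Complex.two_mul_mul_re_mul_le (hc m).le _ _)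
      (Complex.two_mul_mul_re_mul_lt (hc n) hn)
      (Stmt13.hasSum_re_inner_conj hQ σ (fun z => (hσ z).2) z) hnorm
  · have hlim2 : Tendsto (fun n => 2 * |c n|) atTop (nhds 2) := by
      simpa using hlim.abs.const_mul 2
    exact le_antisymm
      (Q.opNorm_le_bound zero_le_two (Stmt13.norm_apply_le (fun n => (hc n).le) hQ))
      (le_of_tendsto' hlim2 (Stmt13.two_mul_abs_le_opNorm (fun z => (hQ z).1)))
end

section
/- Let z₀ ∈ ℂ with |z₀| = 1, and let 0 < α < 2, 0 < β < 2 with α + β > 2. Then there is a constant M depending only on α, β such that for all z ∈ ℂ with z ≠ z₀, ∫_{𝔻} |t − z₀|^{−α} |t − z|^{−β} dA(t) ≤ M |z − z₀|^{2 − α − β}, where 𝔻 is the unit disc and dA is Lebesgue area measure. -/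
/-!
The substitution `t = z₀ + (z - z₀) s` has Jacobian `|z - z₀|²` and turns the integrand into
`|z - z₀|^(-α-β) K(s)` with `K(s) = |s|^(-α) |s - 1|^(-β)`. Hence the integral over the whole plane
equals `M |z - z₀|^(2-α-β)` with `M = ∫ K`, and it dominates the integral over the disc. The kernel
`K` is integrable because it is `O(|s|^(-α))` near `0`, `O(|s - 1|^(-β))` near `1` and
`O(|s|^(-α-β))` away from both poles, and in polar coordinates these powers are integrable under
`α < 2`, `β < 2` and `α + β > 2` respectively.
-/

open MeasureTheory Metric Set

theorem integrableOn_ball_norm_rpow {P : ℝ} (hP : -2 < P) (r : ℝ) :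
    IntegrableOn (fun t : ℂ => ‖t‖ ^ P) (ball 0 r) := by
  rw [integrableOn_fun_norm_addHaar volume (f := fun y => y ^ P), Complex.finrank_real_complex]
  rcases le_or_gt r 0 with hr | hr
  · simp [Ioo_eq_empty_of_le hr]
  refine ((intervalIntegrable_iff_integrableOn_Ioo_of_le hr.le).mp
    (intervalIntegral.intervalIntegrable_rpow' (r := P + 1) (by linarith))).congr_fun
    (fun y hy => ?_) measurableSet_Ioo
  simp [Real.rpow_add_one hy.1.ne', mul_comm]

theorem integrableOn_ball_norm_sub_rpow {P : ℝ} (hP : -2 < P) (c : ℂ) (r : ℝ) :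
    IntegrableOn (fun t : ℂ => ‖t - c‖ ^ P) (ball c r) := by
  have h := (measurePreserving_sub_right volume c).integrableOn_comp_preimage
    (MeasurableEquiv.subRight c).measurableEmbedding (f := fun t : ℂ => ‖t‖ ^ P) (s := ball 0 r)
  have hpre : (fun t => t - c) ⁻¹' ball 0 r = ball c r := by
    ext t; simp [dist_eq_norm]
  rw [hpre] at h
  exact h.mpr (integrableOn_ball_norm_rpow hP r)

theorem integrableOn_compl_ball_norm_rpow {P : ℝ} (hP : P < -2) {r : ℝ} (hr : 0 < r) :
    IntegrableOn (fun t : ℂ => ‖t‖ ^ P) (ball 0 r)ᶜ := by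
  rw [← integrable_indicator_iff measurableSet_ball.compl]
  have key : Integrable (fun t : ℂ => (Ici r).indicator (fun y => y ^ P) ‖t‖) := by
    rw [integrable_fun_norm_addHaar, Complex.finrank_real_complex]
    have h : IntegrableOn (fun y : ℝ => y ^ (P + 1)) (Ici r) :=
      (integrableOn_Ici_iff_integrableOn_Ioi (by simp)).2
        (integrableOn_Ioi_rpow_of_lt (by linarith) hr)
    refine ((integrable_indicator_iff measurableSet_Ici).mpr h).integrableOn.congr_fun
      (fun y (hy : 0 < y) => ?_) measurableSet_Ioi
    by_cases hyr : r ≤ y <;> simp [indicator, hyr, Real.rpow_add_one hy.ne', mul_comm]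
  refine key.congr (.of_forall fun t => ?_)
  by_cases ht : r ≤ ‖t‖ <;> simp [indicator, ht]

theorem Complex.det_mul_left (w : ℂ) : (ContinuousLinearMap.mul ℝ ℂ w).det = ‖w‖ ^ 2 := by
  rw [ContinuousLinearMap.det, ← Complex.normSq_eq_norm_sq, ← Algebra.norm_complex_apply,
    Algebra.norm_apply]
  rfl

section AffineChange

variable {E : Type*} [NormedAddCommGroup E] [NormedSpace ℝ E] (z₀ : ℂ) {w : ℂ}

theorem hasFDerivAt_const_add_mul (s : ℂ) :
    HasFDerivAt (fun s : ℂ => z₀ + w * s) (ContinuousLinearMap.mul ℝ ℂ w) s :=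
  (ContinuousLinearMap.mul ℝ ℂ w).hasFDerivAt.const_add z₀

theorem image_const_add_mul_univ (hw : w ≠ 0) : (fun s : ℂ => z₀ + w * s) '' univ = univ :=
  image_univ_of_surjective fun t => ⟨(t - z₀) / w, by field_simp; ring⟩

theorem injective_const_add_mul (hw : w ≠ 0) : Function.Injective (fun s : ℂ => z₀ + w * s) :=
  fun _ _ h => mul_left_cancel₀ hw (add_left_cancel h)

theorem integrable_comp_const_add_mul_iff (hw : w ≠ 0) (g : ℂ → E) :
    Integrable (fun s => g (z₀ + w * s)) ↔ Integrable g := by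
  have := integrableOn_image_iff_integrableOn_abs_det_fderiv_smul volume MeasurableSet.univ
    (fun s _ => (hasFDerivAt_const_add_mul z₀ s).hasFDerivWithinAt)
    (injective_const_add_mul z₀ hw).injOn g
  rw [image_const_add_mul_univ z₀ hw, integrableOn_univ, integrableOn_univ, Complex.det_mul_left]
    at this
  exact (integrable_smul_iff (by positivity) _).symm.trans this.symm

theorem integral_eq_norm_sq_smul_integral_comp_const_add_mul (hw : w ≠ 0) (g : ℂ → E) :
    ∫ t, g t = ‖w‖ ^ 2 • ∫ s, g (z₀ + w * s) := by
  have := integral_image_eq_integral_abs_det_fderiv_smul volume MeasurableSet.univ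
    (fun s _ => (hasFDerivAt_const_add_mul z₀ s).hasFDerivWithinAt)
    (injective_const_add_mul z₀ hw).injOn g
  rw [image_const_add_mul_univ z₀ hw, setIntegral_univ, setIntegral_univ, Complex.det_mul_left,
    integral_smul] at this
  simpa using this

end AffineChange

noncomputable def twoPoleKernel (α β : ℝ) (s : ℂ) : ℝ := ‖s‖ ^ (-α) * ‖s - 1‖ ^ (-β)

theorem measurable_twoPoleKernel (α β : ℝ) : Measurable (twoPoleKernel α β) := by
  unfold twoPoleKernel; fun_prop

namespace twoPoleKernel

variable {α β : ℝ}

theorem nonneg (s : ℂ) : 0 ≤ twoPoleKernel α β s := by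
  unfold twoPoleKernel; positivity

theorem le_of_half_le_norm_sub_one (hβ : 0 ≤ β) {s : ℂ} (hs : 1 / 2 ≤ ‖s - 1‖) :
    twoPoleKernel α β s ≤ (1 / 2) ^ (-β) * ‖s‖ ^ (-α) := by
  rw [twoPoleKernel, mul_comm]
  exact mul_le_mul_of_nonneg_right (Real.rpow_le_rpow_of_nonpos (by norm_num) hs (by linarith))
    (by positivity)

theorem le_of_half_le_norm (hα : 0 ≤ α) {s : ℂ} (hs : 1 / 2 ≤ ‖s‖) :
    twoPoleKernel α β s ≤ (1 / 2) ^ (-α) * ‖s - 1‖ ^ (-β) :=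
  mul_le_mul_of_nonneg_right (Real.rpow_le_rpow_of_nonpos (by norm_num) hs (by linarith))
    (by positivity)

theorem le_of_half_le_norm_of_half_le_norm_sub_one (hβ : 0 ≤ β) {s : ℂ} (hs : 1 / 2 ≤ ‖s‖)
    (hs1 : 1 / 2 ≤ ‖s - 1‖) :
    twoPoleKernel α β s ≤ (1 / 3) ^ (-β) * ‖s‖ ^ (-(α + β)) := by
  have hpos : 0 < ‖s‖ := by linarith
  have hfar : 1 / 3 * ‖s‖ ≤ ‖s - 1‖ := by
    have := norm_sub_norm_le s 1
    rw [norm_one] at this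
    rcases le_or_gt ‖s‖ (3 / 2) with h | h <;> linarith
  calc twoPoleKernel α β s ≤ ‖s‖ ^ (-α) * (1 / 3 * ‖s‖) ^ (-β) :=
        mul_le_mul_of_nonneg_left
          (Real.rpow_le_rpow_of_nonpos (by positivity) hfar (by linarith)) (by positivity)
    _ = (1 / 3) ^ (-β) * ‖s‖ ^ (-(α + β)) := by
        rw [Real.mul_rpow (by norm_num) hpos.le, neg_add, Real.rpow_add hpos]
        ring

theorem integrableOn_of_le {s : Set ℂ} {g : ℂ → ℝ} (hg : IntegrableOn g s)
    (hs : MeasurableSet s) (hle : ∀ t ∈ s, twoPoleKernel α β t ≤ g t) :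
    IntegrableOn (twoPoleKernel α β) s :=
  hg.mono' (measurable_twoPoleKernel α β).aestronglyMeasurable <|
    (ae_restrict_iff' hs).mpr <| .of_forall fun t ht => by
      rw [Real.norm_of_nonneg (nonneg t)]; exact hle t ht

theorem integrable (hα : α < 2) (hβ : β < 2) (hαβ : 2 < α + β) :
    Integrable (twoPoleKernel α β) := by
  have hα0 : 0 ≤ α := by linarith
  have hβ0 : 0 ≤ β := by linarith
  have hcover : ball 0 (1 / 2) ∪ ball 1 (1 / 2) ∪ ((ball 0 (1 / 2))ᶜ ∩ (ball 1 (1 / 2))ᶜ) =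
      (univ : Set ℂ) := by
    ext; simp only [mem_union, mem_inter_iff, mem_compl_iff, mem_univ]; tauto
  have hnear0 : IntegrableOn (twoPoleKernel α β) (ball 0 (1 / 2)) :=
    integrableOn_of_le ((integrableOn_ball_norm_rpow (by linarith) _).const_mul _)
      measurableSet_ball fun t ht => le_of_half_le_norm_sub_one hβ0 <| by
        have := norm_sub_norm_le 1 t
        rw [mem_ball_zero_iff] at ht
        rw [norm_one, norm_sub_rev] at this
        linarith
  have hnear1 : IntegrableOn (twoPoleKernel α β) (ball 1 (1 / 2)) :=
    integrableOn_of_le ((integrableOn_ball_norm_sub_rpow (by linarith) _ _).const_mul _)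
      measurableSet_ball fun t ht => le_of_half_le_norm hα0 <| by
        have := norm_sub_norm_le 1 (1 - t)
        rw [mem_ball, dist_eq_norm] at ht
        rw [sub_sub_cancel, norm_one, norm_sub_rev] at this
        linarith
  have hfar : IntegrableOn (twoPoleKernel α β) ((ball 0 (1 / 2))ᶜ ∩ (ball 1 (1 / 2))ᶜ) :=
    integrableOn_of_le
      (IntegrableOn.mono_set ((integrableOn_compl_ball_norm_rpow (P := -(α + β))
        (by linarith) (by norm_num)).const_mul _) inter_subset_left)
      (measurableSet_ball.compl.inter measurableSet_ball.compl) fun t ⟨ht0, ht1⟩ => by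
        rw [mem_compl_iff, mem_ball_zero_iff, not_lt] at ht0
        rw [mem_compl_iff, mem_ball, dist_eq_norm, not_lt] at ht1
        exact le_of_half_le_norm_of_half_le_norm_sub_one hβ0 ht0 ht1
  rw [← integrableOn_univ, ← hcover]
  exact (hnear0.union hnear1).union hfar

end twoPoleKernel

section TwoPoles

variable {α β : ℝ}

theorem norm_sub_rpow_mul_norm_sub_rpow_const_add_mul {z₀ z : ℂ} (hz : z ≠ z₀) (s : ℂ) :
    ‖z₀ + (z - z₀) * s - z₀‖ ^ (-α) * ‖z₀ + (z - z₀) * s - z‖ ^ (-β) =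
      ‖z - z₀‖ ^ (-(α + β)) * twoPoleKernel α β s := by
  have hpos : 0 < ‖z - z₀‖ := norm_pos_iff.mpr (sub_ne_zero.mpr hz)
  rw [show z₀ + (z - z₀) * s - z₀ = (z - z₀) * s by ring,
    show z₀ + (z - z₀) * s - z = (z - z₀) * (s - 1) by ring, norm_mul, norm_mul,
    Real.mul_rpow hpos.le (norm_nonneg _), Real.mul_rpow hpos.le (norm_nonneg _), neg_add,
    Real.rpow_add hpos, twoPoleKernel]
  ring

theorem integrable_norm_sub_rpow_mul_norm_sub_rpow (hα : α < 2) (hβ : β < 2) (hαβ : 2 < α + β)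
    {z₀ z : ℂ} (hz : z ≠ z₀) :
    Integrable fun t : ℂ => ‖t - z₀‖ ^ (-α) * ‖t - z‖ ^ (-β) := by
  rw [← integrable_comp_const_add_mul_iff z₀ (sub_ne_zero.mpr hz)]
  simp_rw [norm_sub_rpow_mul_norm_sub_rpow_const_add_mul hz]
  exact (twoPoleKernel.integrable hα hβ hαβ).const_mul _

theorem integral_norm_sub_rpow_mul_norm_sub_rpow {z₀ z : ℂ} (hz : z ≠ z₀) :
    ∫ t : ℂ, ‖t - z₀‖ ^ (-α) * ‖t - z‖ ^ (-β) =
      (∫ s, twoPoleKernel α β s) * ‖z - z₀‖ ^ (2 - α - β) := by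
  have hpos : 0 < ‖z - z₀‖ := norm_pos_iff.mpr (sub_ne_zero.mpr hz)
  rw [integral_eq_norm_sq_smul_integral_comp_const_add_mul z₀ (sub_ne_zero.mpr hz)]
  simp_rw [norm_sub_rpow_mul_norm_sub_rpow_const_add_mul hz]
  rw [integral_const_mul, smul_eq_mul, ← Real.rpow_natCast, ← mul_assoc, ← Real.rpow_add hpos,
    mul_comm]
  congr 2
  push_cast
  ring

end TwoPoles

theorem stmt14_general (α β : ℝ) (hα2 : α < 2) (hβ2 : β < 2) (hαβ : 2 < α + β) :
    ∃ M : ℝ, ∀ z₀ : ℂ, ‖z₀‖ = 1 → ∀ z : ℂ, z ≠ z₀ →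
      ∫ t in Metric.ball (0 : ℂ) 1, ‖t - z₀‖ ^ (-α) * ‖t - z‖ ^ (-β) ≤
        M * ‖z - z₀‖ ^ (2 - α - β) := by
  refine ⟨∫ s, twoPoleKernel α β s, fun z₀ _ z hz => ?_⟩
  rw [← integral_norm_sub_rpow_mul_norm_sub_rpow hz]
  exact setIntegral_le_integral (integrable_norm_sub_rpow_mul_norm_sub_rpow hα2 hβ2 hαβ hz)
    (.of_forall fun t => by positivity)

/-- Vekua's estimate: for `0 < α < 2`, `0 < β < 2`, `α + β > 2`,
there is a constant `M` depending only on `α, β` such that for every `z₀` with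
`|z₀| = 1` and every `z ≠ z₀`,
`∫_{𝔻} |t − z₀|^{−α} |t − z|^{−β} dA(t) ≤ M |z − z₀|^{2 − α − β}`. -/
theorem stmt14 (α β : ℝ) (hα0 : 0 < α) (hα2 : α < 2) (hβ0 : 0 < β) (hβ2 : β < 2)
    (hαβ : 2 < α + β) :
    ∃ M : ℝ, ∀ z₀ : ℂ, ‖z₀‖ = 1 → ∀ z : ℂ, z ≠ z₀ →
      ∫ t in Metric.ball (0 : ℂ) 1, ‖t - z₀‖ ^ (-α) * ‖t - z‖ ^ (-β) ≤
        M * ‖z - z₀‖ ^ (2 - α - β) :=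
  stmt14_general α β hα2 hβ2 hαβ
end
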